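/- arXiv:math/0411617 — 3 statements merged into one kernel-verified Lean document; each statement's English description precedes it below -/
import Mathlib

section
/- The function K(p) = [4π(p+3)^2/(p sin(2π/p))]^{1/p} is decreasing on [4, ∞); in particular, for all p ≥ 4, K(p) ≤ K(4) = (49π)^{1/4}. -/
/-!
Write `K(p) = exp (log A(p) / p)` with `A(p) = 4π(p+3)²/(p sin(2π/p))`.
A function `f(x)/x` is antitone where `x f'(x) ≤ f(x)`. For `f = log A` one has
`p f'(p) = 2p/(p+3) - 1 + y cot y ≤ 2` with `y = 2π/p`, since `y cos y ≤ sin y`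
on `[0, π]`, while `A(p) ≥ 4π·49/(2π) = 98 > e²` for `p ≥ 4` (using `p sin(2π/p) ≤ 2π`),
so `log A ≥ 2`.
-/

open Real Set

theorem Real.mul_cos_le_sin {y : ℝ} (h0 : 0 ≤ y) (hπ : y ≤ π) : y * cos y ≤ sin y := by
  rcases le_or_gt (cos y) 0 with hc | hc
  · nlinarith [sin_nonneg_of_nonneg_of_le_pi h0 hπ]
  · have hy : y < π / 2 := by
      by_contra! h
      exact hc.not_ge (cos_nonpos_of_pi_div_two_le_of_le h (by linarith))
    have := le_tan h0 hy
    rwa [tan_eq_sin_div_cos, le_div_iff₀ hc] at this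

theorem antitoneOn_div_self_of_mul_deriv_le {f f' : ℝ → ℝ} {a : ℝ} (ha : 0 < a)
    (hf : ContinuousOn f (Ici a)) (hf' : ∀ x ∈ Ioi a, HasDerivAt f (f' x) x)
    (hle : ∀ x ∈ Ioi a, x * f' x ≤ f x) : AntitoneOn (fun x ↦ f x / x) (Ici a) := by
  refine antitoneOn_of_hasDerivWithinAt_nonpos (f' := fun x ↦ (f' x * x - f x * 1) / x ^ 2)
    (convex_Ici a) (hf.div continuousOn_id fun x hx ↦ (ha.trans_le hx).ne') ?_ ?_
  · intro x hx
    rw [interior_Ici] at hx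
    exact ((hf' x hx).div (hasDerivAt_id x) (ha.trans hx).ne').hasDerivWithinAt
  · intro x hx
    rw [interior_Ici] at hx
    exact div_nonpos_of_nonpos_of_nonneg (by linarith [hle x hx]) (sq_nonneg x)

noncomputable def kRadicand (p : ℝ) : ℝ := 4 * π * (p + 3) ^ 2 / (p * sin (2 * π / p))

lemma sin_two_pi_div_pos {p : ℝ} (hp : 2 < p) : 0 < sin (2 * π / p) := by
  apply sin_pos_of_pos_of_lt_pi (by positivity)
  rw [div_lt_iff₀ (by linarith)]
  nlinarith [pi_pos]

lemma kRadicand_pos {p : ℝ} (hp : 2 < p) : 0 < kRadicand p := by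
  have hs := sin_two_pi_div_pos hp
  have hp0 : 0 < p := by linarith
  unfold kRadicand
  positivity

lemma log_kRadicand {p : ℝ} (hp : 2 < p) :
    log (kRadicand p) = log (4 * π) + 2 * log (p + 3) - log p - log (sin (2 * π / p)) := by
  have hs := sin_two_pi_div_pos hp
  have hp0 : 0 < p := by linarith
  rw [kRadicand, log_div (by positivity) (by positivity), log_mul (by positivity) (by positivity),
    log_mul hp0.ne' hs.ne', log_pow]
  push_cast
  ring

lemma hasDerivAt_log_kRadicand {p : ℝ} (hp : 2 < p) :
    HasDerivAt (fun p ↦ log (kRadicand p))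
      (2 / (p + 3) - 1 / p + cos (2 * π / p) / sin (2 * π / p) * (2 * π / p ^ 2)) p := by
  have hp0 : p ≠ 0 := by positivity
  have hinv : HasDerivAt (fun x ↦ 2 * π / x) (-(2 * π / p ^ 2)) p := by
    simpa [div_eq_mul_inv] using (hasDerivAt_inv hp0).const_mul (2 * π)
  have hsum := ((((hasDerivAt_id p).add_const 3).log (by simp; linarith)).const_mul 2 |>.const_add
    (log (4 * π))).sub (hasDerivAt_log hp0) |>.sub (hinv.sin.log (sin_two_pi_div_pos hp).ne')
  refine (hsum.congr_of_eventuallyEq ?_).congr_deriv ?_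
  · filter_upwards [Ioi_mem_nhds hp] with x hx using log_kRadicand hx
  · simp only [id]
    ring

lemma mul_deriv_log_kRadicand_le {p : ℝ} (hp : 2 < p) :
    p * (2 / (p + 3) - 1 / p + cos (2 * π / p) / sin (2 * π / p) * (2 * π / p ^ 2)) ≤ 2 := by
  have hs := sin_two_pi_div_pos hp
  have hp0 : 0 < p := by linarith
  have hcot : 2 * π / p * cos (2 * π / p) / sin (2 * π / p) ≤ 1 := by
    rw [div_le_one hs]
    refine mul_cos_le_sin (by positivity) ?_
    rw [div_le_iff₀ hp0]
    nlinarith [pi_pos]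
  have hfrac : 2 * p / (p + 3) ≤ 2 := by
    rw [div_le_iff₀ (by linarith)]
    linarith
  calc _ = 2 * p / (p + 3) - 1 + 2 * π / p * cos (2 * π / p) / sin (2 * π / p) := by
        field_simp
    _ ≤ 2 := by linarith

lemma ninetyEight_le_kRadicand {p : ℝ} (hp : 4 ≤ p) : 98 ≤ kRadicand p := by
  have hs := sin_two_pi_div_pos (by linarith : 2 < p)
  have hp0 : 0 < p := by linarith
  have hsin : p * sin (2 * π / p) ≤ 2 * π := by
    calc p * sin (2 * π / p) ≤ p * (2 * π / p) := by gcongr; exact sin_le (by positivity)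
      _ = 2 * π := by field_simp
  have h49 : 49 ≤ (p + 3) ^ 2 := by nlinarith
  rw [kRadicand, le_div_iff₀ (by positivity)]
  nlinarith [mul_le_mul_of_nonneg_left h49 pi_pos.le]

lemma two_le_log_kRadicand {p : ℝ} (hp : 4 ≤ p) : 2 ≤ log (kRadicand p) := by
  rw [le_log_iff_exp_le (kRadicand_pos (by linarith))]
  calc exp 2 = exp 1 ^ 2 := by rw [← exp_nat_mul]; norm_num
    _ ≤ 3 ^ 2 := by gcongr; exact exp_one_lt_three.le
    _ ≤ kRadicand p := by linarith [ninetyEight_le_kRadicand hp]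

theorem antitoneOn_kRadicand_rpow : AntitoneOn (fun p ↦ kRadicand p ^ (1 / p)) (Ici 4) := by
  have hlog : AntitoneOn (fun p ↦ log (kRadicand p) / p) (Ici 4) :=
    antitoneOn_div_self_of_mul_deriv_le (by norm_num)
      (fun x hx ↦
        (hasDerivAt_log_kRadicand (by linarith [mem_Ici.1 hx])).continuousAt.continuousWithinAt)
      (fun x hx ↦ hasDerivAt_log_kRadicand (by linarith [mem_Ioi.1 hx]))
      (fun x hx ↦ (mul_deriv_log_kRadicand_le (by linarith [mem_Ioi.1 hx])).trans
        (two_le_log_kRadicand (le_of_lt hx)))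
  refine (exp_monotone.comp_antitoneOn hlog).congr fun p hp ↦ ?_
  rw [Function.comp_apply, rpow_def_of_pos (kRadicand_pos (by linarith [mem_Ici.1 hp])),
    mul_one_div]

lemma kRadicand_four : kRadicand 4 = 49 * π := by
  rw [kRadicand, show 2 * π / 4 = π / 2 by ring, sin_pi_div_two]
  ring

/-- The function `K(p) = (4π(p+3)²/(p sin(2π/p)))^{1/p}` is decreasing on `[4, ∞)`;
in particular `K(p) ≤ K(4) = (49π)^{1/4}` for all `p ≥ 4`. -/
theorem K_decreasing :
    (∀ p q : ℝ, 4 ≤ p → p ≤ q →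
      (4 * Real.pi * (q + 3) ^ 2 / (q * Real.sin (2 * Real.pi / q))) ^ (1 / q)
        ≤ (4 * Real.pi * (p + 3) ^ 2 / (p * Real.sin (2 * Real.pi / p))) ^ (1 / p))
    ∧ (4 * Real.pi * ((4 : ℝ) + 3) ^ 2 / (4 * Real.sin (2 * Real.pi / 4))) ^ (1 / (4 : ℝ))
        = (49 * Real.pi) ^ ((1 : ℝ) / 4)
    ∧ ∀ p : ℝ, 4 ≤ p →
      (4 * Real.pi * (p + 3) ^ 2 / (p * Real.sin (2 * Real.pi / p))) ^ (1 / p)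
        ≤ (49 * Real.pi) ^ ((1 : ℝ) / 4) := by
  have hK4 : kRadicand 4 ^ (1 / (4 : ℝ)) = (49 * π) ^ ((1 : ℝ) / 4) := by rw [kRadicand_four]
  exact ⟨fun p q hp hpq ↦ antitoneOn_kRadicand_rpow hp (hp.trans hpq) hpq, hK4,
    fun p hp ↦ hK4 ▸ antitoneOn_kRadicand_rpow (self_mem_Ici : (4 : ℝ) ∈ Ici 4) hp hp⟩
end

section
/- Let φ ∈ Φ with h(y) = φ(e^y) convex, strictly increasing, and Σ_{k≥3} exp(h(k)−h(k+1)) < ∞. If f is measurable on a probability space with tail bound μ{|f| > w} ≤ exp(−h(log w)) for all w ≥ e^2, then ∫ N(φ; e^{−2}|f|) dμ ≤ N(φ; e^{k₀−2}) + Σ_{k ≥ k₀} exp(h(k) − h(k+1)) < ∞ for suitable k₀, so e^{−2} f lies in the Orlicz class of N(φ;·). -/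
/-!
Cut `X` into the set `|f| ≤ e^(m+1)` and the bands `e^(m+k+1) < |f| ≤ e^(m+k+2)`. For `m` large,
`N(e^(-2)|f|) ≤ e^(h(m+k))` on the `k`-th band, because `N u = e^(h(log u))` beyond `C₁` and `h`
increases, while the tail bound gives the band measure at most `e^(-h(m+k+1))`. So the modular is
at most `e^(h m) + ∑ₖ e^(h(m+k) - h(m+k+1)) < ∞`. Convexity makes `h` grow at least linearly, so
`N(e^(k₀-2)) = e^(h(k₀-2))` alone exceeds this finite bound once `k₀` is large.
-/

open MeasureTheory Real Filter Set
open scoped ENNReal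

theorem ConvexOn.tendsto_atTop_of_lt {h : ℝ → ℝ} (hconv : ConvexOn ℝ univ h) {x y : ℝ}
    (hxy : x < y) (hlt : h x < h y) : Tendsto h atTop atTop := by
  set s := (h y - h x) / (y - x)
  have hs : 0 < s := div_pos (sub_pos.mpr hlt) (sub_pos.mpr hxy)
  have hline : ∀ᶠ z in atTop, h y + s * (z - y) ≤ h z := by
    filter_upwards [eventually_gt_atTop y] with z hz
    have := hconv.slope_mono_adjacent (mem_univ x) (mem_univ z) hxy hz
    rw [le_div_iff₀ (sub_pos.mpr hz)] at this
    linarith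
  refine tendsto_atTop_mono' _ hline (tendsto_atTop_add_const_left _ _ ?_)
  exact (tendsto_atTop_add_const_right _ _ tendsto_id).const_mul_atTop hs

theorem lintegral_le_add_tsum_of_bands {X : Type*} [MeasurableSpace X] (μ : Measure X)
    {F : X → ℝ} (hF : Measurable F) {t : ℕ → ℝ} (ht : Tendsto t atTop atTop)
    {G : X → ℝ≥0∞} {C : ℝ≥0∞} {c : ℕ → ℝ≥0∞}
    (hlow : ∀ x, F x ≤ t 0 → G x ≤ C)
    (hband : ∀ x k, F x ∈ Ioc (t k) (t (k + 1)) → G x ≤ c k) :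
    ∫⁻ x, G x ∂μ ≤ C * μ univ + ∑' k, c k * μ (F ⁻¹' Ioc (t k) (t (k + 1))) := by
  set B : ℕ → Set X := fun k => F ⁻¹' Ioc (t k) (t (k + 1))
  have hB : ∀ k, MeasurableSet (B k) := fun k => hF measurableSet_Ioc
  have hpt : ∀ x, G x ≤ C + ∑' k, (B k).indicator (fun _ => c k) x := by
    intro x
    rcases le_or_gt (F x) (t 0) with hx | hx
    · exact (hlow x hx).trans le_self_add
    obtain ⟨n, hn⟩ := (ht.eventually_ge_atTop (F x)).exists
    obtain ⟨k, -, hk⟩ := mem_iUnion₂.mp (Ioc_subset_biUnion_Ioc n t ⟨hx, hn⟩)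
    calc G x ≤ c k := hband x k hk
      _ = (B k).indicator (fun _ => c k) x :=
          (indicator_of_mem (mem_preimage.mpr hk) fun _ => c k).symm
      _ ≤ _ := ENNReal.le_tsum k
      _ ≤ _ := le_add_self
  calc ∫⁻ x, G x ∂μ ≤ ∫⁻ x, (C + ∑' k, (B k).indicator (fun _ => c k) x) ∂μ :=
        lintegral_mono hpt
    _ = _ := by
        rw [lintegral_add_left measurable_const, lintegral_const,
          lintegral_tsum fun k => (measurable_const.indicator (hB k)).aemeasurable]
        simp only [lintegral_indicator_const (hB _), B]

section Orlicz

variable {φ h N : ℝ → ℝ} {C₁ C₂ : ℝ}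

theorem eventually_orlicz_exp_eq (hh : ∀ y, h y = φ (exp y))
    (hNlarge : ∀ u : ℝ, C₁ < |u| → N u = exp (φ |u|)) :
    ∀ᶠ b in atTop, N (exp b) = exp (h b) := by
  filter_upwards [tendsto_exp_atTop.eventually_gt_atTop C₁] with b hb
  rw [hNlarge _ (by rwa [abs_exp]), abs_exp, hh]

theorem eventually_orlicz_le (hh : ∀ y, h y = φ (exp y)) (hmono : Monotone h)
    (htop : Tendsto h atTop atTop) (hC₁ : 0 < C₁) (hC₂ : 0 ≤ C₂)
    (hNsmall : ∀ u : ℝ, |u| ≤ C₁ → N u = C₂ * |u|)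
    (hNlarge : ∀ u : ℝ, C₁ < |u| → N u = exp (φ |u|)) :
    ∀ᶠ b in atTop, ∀ u, 0 ≤ u → u ≤ exp b → N u ≤ exp (h b) := by
  filter_upwards [(tendsto_exp_atTop.comp htop).eventually_ge_atTop (C₂ * C₁)]
    with b hb u hu hub
  rcases le_or_gt u C₁ with hsmall | hlarge
  · rw [hNsmall u (by rwa [abs_of_nonneg hu]), abs_of_nonneg hu]
    exact (mul_le_mul_of_nonneg_left hsmall hC₂).trans hb
  · have hupos : 0 < u := hC₁.trans hlarge
    rw [hNlarge u (by rwa [abs_of_nonneg hu]), abs_of_nonneg hu, ← exp_log hupos, ← hh]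
    exact exp_le_exp.mpr (hmono ((log_le_iff_le_exp hupos).mpr hub))

theorem exp_neg_two_mul_le_exp {a u : ℝ} (hu : u ≤ exp (a + 2)) : exp (-2) * u ≤ exp a :=
  calc exp (-2) * u ≤ exp (-2) * exp (a + 2) := by gcongr
    _ = exp a := by rw [← exp_add]; ring_nf

theorem measure_exp_lt_abs_le {X : Type*} [MeasurableSpace X] {μ : Measure X}
    [IsFiniteMeasure μ] {f : X → ℝ}
    (htail : ∀ w : ℝ, exp 2 ≤ w → (μ {x | w < |f x|}).toReal ≤ exp (-(h (log w))))
    {a : ℝ} (ha : 2 ≤ a) : μ {x | exp a < |f x|} ≤ ENNReal.ofReal (exp (-h a)) := by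
  have := htail (exp a) (exp_le_exp.mpr ha)
  rw [log_exp] at this
  exact (ENNReal.le_ofReal_iff_toReal_le (measure_ne_top μ _) (exp_nonneg _)).mpr this

theorem lintegral_orlicz_lt_top {X : Type*} [MeasurableSpace X] {μ : Measure X}
    [IsFiniteMeasure μ] (hh : ∀ y, h y = φ (exp y)) (hmono : Monotone h)
    (htop : Tendsto h atTop atTop) (hsum : Summable fun n : ℕ => exp (h n - h (n + 1)))
    (hC₁ : 0 < C₁) (hC₂ : 0 ≤ C₂)
    (hNsmall : ∀ u : ℝ, |u| ≤ C₁ → N u = C₂ * |u|)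
    (hNlarge : ∀ u : ℝ, C₁ < |u| → N u = exp (φ |u|))
    {f : X → ℝ} (hf : Measurable f)
    (htail : ∀ w : ℝ, exp 2 ≤ w → (μ {x | w < |f x|}).toReal ≤ exp (-(h (log w)))) :
    ∫⁻ x, ENNReal.ofReal (N (exp (-2) * |f x|)) ∂μ < ∞ := by
  obtain ⟨b₀, hb₀⟩ :=
    eventually_atTop.mp (eventually_orlicz_le hh hmono htop hC₁ hC₂ hNsmall hNlarge)
  obtain ⟨m, hm⟩ := exists_nat_ge (max b₀ 1)
  have hmb₀ : b₀ ≤ m := le_of_max_le_left hm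
  have hm1 : (1 : ℝ) ≤ m := le_of_max_le_right hm
  set t : ℕ → ℝ := fun k => exp (m + 1 + k)
  have ht : Tendsto t atTop atTop :=
    tendsto_exp_atTop.comp (tendsto_atTop_add_const_left _ _ tendsto_natCast_atTop_atTop)
  have hlow : ∀ x, |f x| ≤ t 0 →
      ENNReal.ofReal (N (exp (-2) * |f x|)) ≤ ENNReal.ofReal (exp (h m)) := by
    intro x hx
    refine ENNReal.ofReal_le_ofReal (hb₀ m hmb₀ _ (by positivity) ?_)
    calc exp (-2) * |f x| ≤ exp (m - 1) :=
          exp_neg_two_mul_le_exp (hx.trans_eq (by simp only [t]; push_cast; ring_nf))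
      _ ≤ exp m := exp_le_exp.mpr (by linarith)
  have hband : ∀ x k, |f x| ∈ Ioc (t k) (t (k + 1)) →
      ENNReal.ofReal (N (exp (-2) * |f x|)) ≤ ENNReal.ofReal (exp (h (m + k))) := fun x k hx =>
    ENNReal.ofReal_le_ofReal <| hb₀ (m + k) (by linarith [k.cast_nonneg (α := ℝ)]) _
      (by positivity)
      (exp_neg_two_mul_le_exp (hx.2.trans_eq (by simp only [t]; push_cast; ring_nf)))
  have hband_mass : ∀ k : ℕ, ENNReal.ofReal (exp (h (m + k))) *
      μ ((fun x => |f x|) ⁻¹' Ioc (t k) (t (k + 1)))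
        ≤ ENNReal.ofReal (exp (h (m + k) - h (m + k + 1))) := by
    intro k
    calc _ ≤ ENNReal.ofReal (exp (h (m + k))) * ENNReal.ofReal (exp (-h (m + 1 + k))) := by
          gcongr
          exact (measure_mono fun x hx => hx.1).trans
            (measure_exp_lt_abs_le htail (by linarith [k.cast_nonneg (α := ℝ)]))
      _ = _ := by
          rw [← ENNReal.ofReal_mul (exp_nonneg _), ← exp_add, sub_eq_add_neg, add_right_comm]
  have hsum_m : Summable fun k : ℕ => exp (h (m + k) - h (m + k + 1)) :=
    ((summable_nat_add_iff m).mpr hsum).congr fun k => by push_cast; ring_nf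
  refine (lintegral_le_add_tsum_of_bands μ hf.abs ht hlow hband).trans_lt
    (ENNReal.add_lt_top.mpr ⟨?_, ?_⟩)
  · exact ENNReal.mul_lt_top ENNReal.ofReal_lt_top (measure_lt_top μ univ)
  · exact (ENNReal.tsum_le_tsum hband_mass).trans_lt hsum_m.tsum_ofReal_lt_top

end Orlicz

theorem modular_finite_of_tail_general {X : Type*} [MeasurableSpace X] (μ : Measure X)
    [IsProbabilityMeasure μ]
    (φ : ℝ → ℝ)
    (h : ℝ → ℝ) (hh : ∀ y, h y = φ (Real.exp y))
    (hmono : StrictMono h) (hconv : ConvexOn ℝ Set.univ h)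
    (hsum : Summable (fun k : ℕ => Real.exp (h (k + 3) - h (k + 4))))
    (C₁ C₂ : ℝ) (hC₁ : 0 < C₁) (hC₂ : 0 < C₂)
    (N : ℝ → ℝ)
    (hNsmall : ∀ u : ℝ, |u| ≤ C₁ → N u = C₂ * |u|)
    (hNlarge : ∀ u : ℝ, C₁ < |u| → N u = Real.exp (φ |u|))
    (f : X → ℝ) (hf : Measurable f)
    (htail : ∀ w : ℝ, Real.exp 2 ≤ w →
      (μ {x | w < |f x|}).toReal ≤ Real.exp (-(h (Real.log w)))) :
    ∃ k₀ : ℕ, Summable (fun k : ℕ => Real.exp (h (k₀ + k) - h (k₀ + k + 1))) ∧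
      ∫⁻ x, ENNReal.ofReal (N (Real.exp (-2) * |f x|)) ∂μ
        ≤ ENNReal.ofReal (N (Real.exp ((k₀ : ℝ) - 2))
            + ∑' k : ℕ, Real.exp (h (k₀ + k) - h (k₀ + k + 1))) := by
  have htop : Tendsto h atTop atTop := hconv.tendsto_atTop_of_lt zero_lt_one (hmono zero_lt_one)
  have hsum' : Summable fun n : ℕ => exp (h n - h (n + 1)) :=
    (summable_nat_add_iff 3).mp (hsum.congr fun k => by push_cast; ring_nf)
  set I := ∫⁻ x, ENNReal.ofReal (N (exp (-2) * |f x|)) ∂μ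
  have hI : I < ∞ := lintegral_orlicz_lt_top hh hmono.monotone htop hsum' hC₁ hC₂.le
    hNsmall hNlarge hf htail
  have hlarge : ∀ᶠ b in atTop, N (exp b) = exp (h b) ∧ I.toReal ≤ exp (h b) :=
    (eventually_orlicz_exp_eq hh hNlarge).and
      ((tendsto_exp_atTop.comp htop).eventually_ge_atTop I.toReal)
  obtain ⟨k₀, hNk₀, hIk₀⟩ :=
    ((tendsto_atTop_add_const_right _ (-2) tendsto_natCast_atTop_atTop).eventually hlarge).exists
  have hsum_k₀ : Summable fun k : ℕ => exp (h (k₀ + k) - h (k₀ + k + 1)) :=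
    ((summable_nat_add_iff k₀).mpr hsum').congr fun k => by push_cast; ring_nf
  refine ⟨k₀, hsum_k₀, ?_⟩
  calc I = ENNReal.ofReal I.toReal := (ENNReal.ofReal_toReal hI.ne).symm
    _ ≤ _ := ENNReal.ofReal_le_ofReal ?_
  rw [← sub_eq_add_neg] at hNk₀ hIk₀
  have htsum : 0 ≤ ∑' k : ℕ, exp (h (k₀ + k) - h (k₀ + k + 1)) :=
    tsum_nonneg fun k => (exp_pos _).le
  linarith

/-- If `f` has the tail bound `μ{|f| > w} ≤ exp(−h(log w))` for `w ≥ e²`, with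
`φ ∈ Φ`, then for a suitable `k₀` the modular of `e⁻² f` is finite:
`∫ N(φ; e⁻²|f|) dμ ≤ N(φ; e^{k₀−2}) + Σ_{k ≥ k₀} exp(h(k) − h(k+1)) < ∞`. -/
theorem modular_finite_of_tail {X : Type*} [MeasurableSpace X] (μ : Measure X)
    [IsProbabilityMeasure μ]
    (φ : ℝ → ℝ) (hφc : ContinuousOn φ (Set.Ici 0))
    (hφ0 : ∀ z ∈ Set.Ici (0 : ℝ), (φ z = 0 ↔ z = 0))
    (h : ℝ → ℝ) (hh : ∀ y, h y = φ (Real.exp y))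
    (hmono : StrictMono h) (hconv : ConvexOn ℝ Set.univ h)
    (hsum : Summable (fun k : ℕ => Real.exp (h (k + 3) - h (k + 4))))
    (C₁ C₂ : ℝ) (hC₁ : 0 < C₁) (hC₂ : 0 < C₂)
    (N : ℝ → ℝ)
    (hNsmall : ∀ u : ℝ, |u| ≤ C₁ → N u = C₂ * |u|)
    (hNlarge : ∀ u : ℝ, C₁ < |u| → N u = Real.exp (φ |u|))
    (f : X → ℝ) (hf : Measurable f)
    (htail : ∀ w : ℝ, Real.exp 2 ≤ w →
      (μ {x | w < |f x|}).toReal ≤ Real.exp (-(h (Real.log w)))) :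
    ∃ k₀ : ℕ, Summable (fun k : ℕ => Real.exp (h (k₀ + k) - h (k₀ + k + 1))) ∧
      ∫⁻ x, ENNReal.ofReal (N (Real.exp (-2) * |f x|)) ∂μ
        ≤ ENNReal.ofReal (N (Real.exp ((k₀ : ℝ) - 2))
            + ∑' k : ℕ, Real.exp (h (k₀ + k) - h (k₀ + k + 1))) :=
  modular_finite_of_tail_general μ φ h hh hmono hconv hsum C₁ C₂ hC₁ hC₂ N hNsmall hNlarge f hf
    htail
end

section
/- Let r ≥ 1 be an integer and m > 0. If a measurable function f on a probability space satisfies μ{|f| > u} ≤ C · u^{−1/r} (log u)^{1/(mr)} for u ≥ 3, then for every β < 1/r one has ||f||_β ≤ C' · (1/r − β)^{−(mr+1)/(mr β)} for a constant C' depending on C, m, r; in particular sup_{β ∈ [4/(4r+1),1/r)} ||f||_β · (1/r − β)^{(mr+1)/m} < ∞ after adjusting exponents. -/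
open MeasureTheory Real Set

/-!
By the layer-cake formula, `∫ |f|^β = β ∫₀^∞ t^(β-1) μ{|f| > t} dt`. On `(0, 3]` the tail
is at most `1`. On `(3, ∞)`, with `ε = 1/r - β` and `a = 1/(mr)`, the estimate
`(log t)^a ≤ (2a/ε)^a t^(ε/2)` makes the integrand `O(ε^(-a) t^(-1-ε/2))`, whose integral is
`O(ε^(-a-1))`. Hence `∫ |f|^β ≤ K ε^(-(a+1))` with `K = K(C, a)`, and taking `1/β`-th powers
gives the first claim. In the second claim the powers of `ε` combine to `ε^(-cε)` with `c`
bounded on the range of `β`, and `ε^(-ε) ≤ e` because `-ε log ε ≤ 1 - ε`.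
-/

namespace Real

lemma rpow_log_le_mul_rpow {t a δ : ℝ} (ht : 1 ≤ t) (ha : 0 < a) (hδ : 0 < δ) :
    log t ^ a ≤ (a / δ) ^ a * t ^ δ := by
  have ht0 : 0 ≤ t := zero_le_one.trans ht
  calc log t ^ a ≤ (t ^ (δ / a) / (δ / a)) ^ a :=
        rpow_le_rpow (log_nonneg ht) (log_le_rpow_div ht0 (by positivity)) ha.le
    _ = (a / δ) ^ a * t ^ δ := by
        rw [div_eq_mul_inv, inv_div, mul_comm, mul_rpow (by positivity) (by positivity),
          ← rpow_mul ht0, div_mul_cancel₀ _ ha.ne']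

lemma rpow_neg_mul_self_le_exp {ε c : ℝ} (hε : 0 < ε) (hc : 0 ≤ c) :
    ε ^ (-(c * ε)) ≤ exp c := by
  rw [rpow_def_of_pos hε, exp_le_exp]
  nlinarith [self_sub_one_le_mul_log hε.le]

lemma rpow_neg_div_mul_rpow_div_le_exp {p β b q : ℝ} (hβ : 0 < β) (hβp : β < p)
    (hb : 0 ≤ b) (hβq : 1 / β ≤ q) :
    (p - β) ^ (-(b / β)) * (p - β) ^ (b / p) ≤ exp (b / p * q) := by
  have hε : 0 < p - β := by linarith
  have hp : 0 < p := hβ.trans hβp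
  have hexp : -(b / β) + b / p = -(b / p * (1 / β) * (p - β)) := by field_simp; ring
  calc (p - β) ^ (-(b / β)) * (p - β) ^ (b / p)
      = (p - β) ^ (-(b / p * (1 / β) * (p - β))) := by rw [← rpow_add hε, hexp]
    _ ≤ exp (b / p * (1 / β)) := rpow_neg_mul_self_le_exp hε (by positivity)
    _ ≤ exp (b / p * q) := by gcongr

lemma mul_rpow_le_of_le_mul_rpow_mul_log_rpow {M C t p a β : ℝ} (ht : 1 ≤ t) (ha : 0 < a)
    (hβp : β < p) (hM : M ≤ C * t ^ (-p) * log t ^ a) :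
    M * t ^ (β - 1) ≤ max C 0 * (2 * a / (p - β)) ^ a * t ^ (-1 - (p - β) / 2) := by
  have ht0 : 0 < t := zero_lt_one.trans_le ht
  have hε : 0 < (p - β) / 2 := by linarith
  calc M * t ^ (β - 1) ≤ max C 0 * t ^ (-p) * log t ^ a * t ^ (β - 1) := by
        gcongr
        refine hM.trans ?_
        gcongr
        · exact rpow_nonneg (log_nonneg ht) _
        · exact le_max_left _ _
    _ ≤ max C 0 * t ^ (-p) * ((a / ((p - β) / 2)) ^ a * t ^ ((p - β) / 2)) * t ^ (β - 1) := by
        gcongr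
        exact rpow_log_le_mul_rpow ht ha hε
    _ = max C 0 * (2 * a / (p - β)) ^ a * (t ^ (-p) * t ^ ((p - β) / 2) * t ^ (β - 1)) := by
        rw [div_div_eq_mul_div, mul_comm a 2]; ring
    _ = max C 0 * (2 * a / (p - β)) ^ a * t ^ (-1 - (p - β) / 2) := by
        rw [← rpow_add ht0, ← rpow_add ht0]; ring_nf

end Real

section LayerCake

variable {X : Type*} [MeasurableSpace X] {μ : Measure X} {g : X → ℝ} {β : ℝ}

lemma lintegral_Ioc_meas_lt_mul_rpow_le [IsProbabilityMeasure μ] {c : ℝ} (hc : 0 ≤ c)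
    (hβ : 0 < β) :
    ∫⁻ t in Ioc 0 c, μ {x | t < g x} * ENNReal.ofReal (t ^ (β - 1))
      ≤ ENNReal.ofReal (c ^ β / β) := by
  have hint : IntegrableOn (fun t : ℝ => t ^ (β - 1)) (Ioc 0 c) :=
    (intervalIntegrable_iff_integrableOn_Ioc_of_le hc).1
      (intervalIntegral.intervalIntegrable_rpow' (by linarith))
  calc ∫⁻ t in Ioc 0 c, μ {x | t < g x} * ENNReal.ofReal (t ^ (β - 1))
      ≤ ∫⁻ t in Ioc 0 c, ENNReal.ofReal (t ^ (β - 1)) :=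
        lintegral_mono fun t => mul_le_of_le_one_left' prob_le_one
    _ = ENNReal.ofReal (c ^ β / β) := by
        rw [← ofReal_integral_eq_lintegral_ofReal hint
          (ae_restrict_of_forall_mem measurableSet_Ioc fun t ht => rpow_nonneg ht.1.le _),
          ← intervalIntegral.integral_of_le hc, integral_rpow (Or.inl (by linarith)),
          sub_add_cancel, zero_rpow hβ.ne', sub_zero]

lemma lintegral_Ioi_meas_lt_mul_rpow_le [IsFiniteMeasure μ] {p a C c : ℝ} (hc : 1 ≤ c)
    (ha : 0 < a) (hβp : β < p)
    (htail : ∀ u, c ≤ u → (μ {x | u < g x}).toReal ≤ C * u ^ (-p) * log u ^ a) :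
    ∫⁻ t in Ioi c, μ {x | t < g x} * ENNReal.ofReal (t ^ (β - 1))
      ≤ ENNReal.ofReal (max C 0 * (2 * a / (p - β)) ^ a * (2 / (p - β))) := by
  set A := max C 0 * (2 * a / (p - β)) ^ a
  have hε : 0 < (p - β) / 2 := by linarith
  have hc0 : 0 < c := zero_lt_one.trans_le hc
  have hint : IntegrableOn (fun t : ℝ => A * t ^ (-1 - (p - β) / 2)) (Ioi c) :=
    (integrableOn_Ioi_rpow_of_lt (by linarith) hc0).const_mul _
  calc ∫⁻ t in Ioi c, μ {x | t < g x} * ENNReal.ofReal (t ^ (β - 1))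
      ≤ ∫⁻ t in Ioi c, ENNReal.ofReal (A * t ^ (-1 - (p - β) / 2)) := by
        refine setLIntegral_mono' measurableSet_Ioi fun t (ht : c < t) => ?_
        rw [← ENNReal.ofReal_toReal (measure_ne_top μ _),
          ← ENNReal.ofReal_mul ENNReal.toReal_nonneg]
        exact ENNReal.ofReal_le_ofReal <|
          mul_rpow_le_of_le_mul_rpow_mul_log_rpow (hc.trans ht.le) ha hβp (htail t ht.le)
    _ = ENNReal.ofReal (A * (c ^ (-((p - β) / 2)) * (2 / (p - β)))) := by
        rw [← ofReal_integral_eq_lintegral_ofReal hint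
          (ae_restrict_of_forall_mem measurableSet_Ioi fun t (ht : c < t) =>
            mul_nonneg (by positivity) (rpow_nonneg (hc0.trans ht).le _)),
          integral_const_mul, integral_Ioi_rpow_of_lt (by linarith) hc0]
        have hexp : -1 - (p - β) / 2 + 1 = -((p - β) / 2) := by ring
        rw [hexp, neg_div_neg_eq, div_div_eq_mul_div, mul_div_assoc]
    _ ≤ ENNReal.ofReal (A * (2 / (p - β))) := by
        gcongr
        exact mul_le_of_le_one_left (by positivity)
          (rpow_le_one_of_one_le_of_nonpos hc (by linarith))

variable {f : X → ℝ}

lemma integral_abs_rpow_le_of_tail [IsProbabilityMeasure μ] (hf : Measurable f)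
    {p a C c : ℝ} (hc : 1 ≤ c) (ha : 0 < a) (hβ : 0 < β) (hβp : β < p)
    (htail : ∀ u, c ≤ u → (μ {x | u < |f x|}).toReal ≤ C * u ^ (-p) * log u ^ a) :
    ∫ x, |f x| ^ β ∂μ
      ≤ c ^ β + β * (max C 0 * (2 * a / (p - β)) ^ a * (2 / (p - β))) := by
  have hc0 : 0 ≤ c := zero_le_one.trans hc
  have hlintegral : ∫⁻ x, ENNReal.ofReal (|f x| ^ β) ∂μ
      ≤ ENNReal.ofReal (c ^ β + β * (max C 0 * (2 * a / (p - β)) ^ a * (2 / (p - β)))) := by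
    rw [lintegral_rpow_eq_lintegral_meas_lt_mul μ (ae_of_all _ fun x => abs_nonneg (f x))
        hf.abs.aemeasurable hβ, ← Ioc_union_Ioi_eq_Ioi hc0,
      lintegral_union measurableSet_Ioi (Ioc_disjoint_Ioi le_rfl), mul_add,
      ENNReal.ofReal_add (by positivity) (by positivity)]
    gcongr ?_ + ?_
    · calc _ ≤ ENNReal.ofReal β * ENNReal.ofReal (c ^ β / β) := by
            gcongr; exact lintegral_Ioc_meas_lt_mul_rpow_le hc0 hβ
        _ = ENNReal.ofReal (c ^ β) := by
            rw [← ENNReal.ofReal_mul hβ.le, mul_div_cancel₀ _ hβ.ne']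
    · rw [ENNReal.ofReal_mul hβ.le]
      gcongr
      exact lintegral_Ioi_meas_lt_mul_rpow_le hc ha hβp htail
  rw [integral_eq_lintegral_of_nonneg_ae (ae_of_all _ fun x => by positivity)
    (hf.abs.pow_const β).aestronglyMeasurable]
  exact ENNReal.toReal_le_of_le_ofReal (by positivity) hlintegral

lemma integral_abs_rpow_le_mul_rpow_of_tail [IsProbabilityMeasure μ] (hf : Measurable f)
    {p a C : ℝ} (hp : p ≤ 1) (ha : 0 < a) (hβ : 0 < β) (hβp : β < p)
    (htail : ∀ u, 3 ≤ u → (μ {x | u < |f x|}).toReal ≤ C * u ^ (-p) * log u ^ a) :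
    ∫ x, |f x| ^ β ∂μ ≤ (3 + 2 * max C 0 * (2 * a) ^ a) * (p - β) ^ (-(a + 1)) := by
  set ε := p - β
  have hε : 0 < ε := by linarith
  have hε_pow : 1 ≤ ε ^ (-(a + 1)) :=
    one_le_rpow_of_pos_of_le_one_of_nonpos hε (by linarith) (by linarith)
  have hB : (2 * a / ε) ^ a * (2 / ε) = 2 * (2 * a) ^ a * ε ^ (-(a + 1)) := by
    rw [div_rpow (by positivity) hε.le, rpow_neg hε.le, rpow_add_one hε.ne']
    field_simp
  have hB0 : 0 ≤ max C 0 * (2 * a / ε) ^ a * (2 / ε) := by positivity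
  calc ∫ x, |f x| ^ β ∂μ ≤ 3 ^ β + β * (max C 0 * (2 * a / ε) ^ a * (2 / ε)) :=
        integral_abs_rpow_le_of_tail hf (by norm_num) ha hβ hβp htail
    _ ≤ 3 + max C 0 * (2 * a / ε) ^ a * (2 / ε) :=
        add_le_add (rpow_le_self_of_one_le (by norm_num) (by linarith))
          (mul_le_of_le_one_left hB0 (by linarith))
    _ ≤ (3 + 2 * max C 0 * (2 * a) ^ a) * ε ^ (-(a + 1)) := by
        rw [mul_assoc, hB]
        nlinarith

lemma rpow_integral_abs_rpow_le_of_tail [IsProbabilityMeasure μ] (hf : Measurable f)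
    {p a C q : ℝ} (hp : p ≤ 1) (ha : 0 < a) (hβ : 0 < β) (hβp : β < p) (hβq : 1 / β ≤ q)
    (htail : ∀ u, 3 ≤ u → (μ {x | u < |f x|}).toReal ≤ C * u ^ (-p) * log u ^ a) :
    (∫ x, |f x| ^ β ∂μ) ^ (1 / β)
      ≤ (3 + 2 * max C 0 * (2 * a) ^ a) ^ q * (p - β) ^ (-((a + 1) / β)) := by
  have hε : 0 < p - β := by linarith
  have hK : 1 ≤ 3 + 2 * max C 0 * (2 * a) ^ a := by
    have : 0 ≤ 2 * max C 0 * (2 * a) ^ a := by positivity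
    linarith
  have hint := integral_abs_rpow_le_mul_rpow_of_tail hf hp ha hβ hβp htail
  calc (∫ x, |f x| ^ β ∂μ) ^ (1 / β)
      ≤ ((3 + 2 * max C 0 * (2 * a) ^ a) * (p - β) ^ (-(a + 1))) ^ (1 / β) := by gcongr
    _ = (3 + 2 * max C 0 * (2 * a) ^ a) ^ (1 / β) * (p - β) ^ (-((a + 1) / β)) := by
        rw [mul_rpow (by positivity) (by positivity), ← rpow_mul hε.le, neg_mul, mul_one_div]
    _ ≤ (3 + 2 * max C 0 * (2 * a) ^ a) ^ q * (p - β) ^ (-((a + 1) / β)) := by gcongr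

end LayerCake

/-- From the tail estimate `μ{|f| > u} ≤ C u^{−1/r} (log u)^{1/(mr)}` (`u ≥ 3`)
one gets `‖f‖_β ≤ C' (1/r − β)^{−(mr+1)/(mrβ)}` for every `β ∈ [4/(4r+1), 1/r)`,
and in particular `sup_β ‖f‖_β (1/r − β)^{(mr+1)/m} < ∞`. -/
theorem V_norm_from_tail {X : Type*} [MeasurableSpace X] (μ : Measure X)
    [IsProbabilityMeasure μ]
    (r : ℕ) (hr : 1 ≤ r) (m : ℝ) (hm : 0 < m) (C : ℝ)
    (f : X → ℝ) (hf : Measurable f)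
    (htail : ∀ u : ℝ, 3 ≤ u →
      (μ {x | u < |f x|}).toReal
        ≤ C * u ^ (-(1 / (r : ℝ))) * (Real.log u) ^ (1 / (m * (r : ℝ)))) :
    (∃ C' : ℝ, ∀ β : ℝ, β ∈ Set.Ico (4 / (4 * (r : ℝ) + 1)) (1 / (r : ℝ)) →
        (∫ x, |f x| ^ β ∂μ) ^ (1 / β)
          ≤ C' * (1 / (r : ℝ) - β) ^ (-((m * (r : ℝ) + 1) / (m * (r : ℝ) * β))))
    ∧ (∃ M : ℝ, ∀ β : ℝ, β ∈ Set.Ico (4 / (4 * (r : ℝ) + 1)) (1 / (r : ℝ)) →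
        (∫ x, |f x| ^ β ∂μ) ^ (1 / β)
          * (1 / (r : ℝ) - β) ^ ((m * (r : ℝ) + 1) / m) ≤ M) := by
  have hr0 : (0 : ℝ) < r := by exact_mod_cast hr
  have hp : 1 / (r : ℝ) ≤ 1 := (div_le_one hr0).2 (by exact_mod_cast hr)
  set a := 1 / (m * r) with ha
  have hexp₁ : ∀ β : ℝ, (a + 1) / β = (m * r + 1) / (m * r * β) := fun β => by
    rw [ha]; field_simp; ring
  have hexp₂ : (a + 1) / (1 / r) = (m * r + 1) / m := by rw [ha]; field_simp; ring
  set K := 3 + 2 * max C 0 * (2 * a) ^ a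
  set q := (4 * (r : ℝ) + 1) / 4
  have hβ : ∀ β ∈ Ico (4 / (4 * (r : ℝ) + 1)) (1 / r), 0 < β ∧ 1 / β ≤ q :=
    fun β hβI =>
      have hβ0 : 0 < β := (by positivity : (0 : ℝ) < 4 / (4 * r + 1)).trans_le hβI.1
      ⟨hβ0, (one_div_le hβ0 (by positivity)).2 (by rw [one_div_div]; exact hβI.1)⟩
  have hnorm : ∀ β ∈ Ico (4 / (4 * (r : ℝ) + 1)) (1 / r),
      (∫ x, |f x| ^ β ∂μ) ^ (1 / β)
        ≤ K ^ q * (1 / (r : ℝ) - β) ^ (-((m * r + 1) / (m * r * β))) := fun β hβI => by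
    simpa only [hexp₁] using rpow_integral_abs_rpow_le_of_tail hf hp (by positivity)
      (hβ β hβI).1 hβI.2 (hβ β hβI).2 htail
  refine ⟨⟨K ^ q, hnorm⟩, ⟨K ^ q * exp ((m * r + 1) / m * q), fun β hβI => ?_⟩⟩
  obtain ⟨hβ0, hβq⟩ := hβ β hβI
  calc (∫ x, |f x| ^ β ∂μ) ^ (1 / β) * (1 / (r : ℝ) - β) ^ ((m * r + 1) / m)
      ≤ K ^ q * ((1 / (r : ℝ) - β) ^ (-((m * r + 1) / (m * r * β)))
          * (1 / (r : ℝ) - β) ^ ((m * r + 1) / m)) := by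
        rw [← mul_assoc]
        exact mul_le_mul_of_nonneg_right (hnorm β hβI) (rpow_nonneg (by linarith [hβI.2]) _)
    _ ≤ K ^ q * exp ((m * r + 1) / m * q) := by
        rw [← hexp₁, ← hexp₂]
        gcongr
        exact rpow_neg_div_mul_rpow_div_le_exp hβ0 hβI.2 (by positivity) hβq
end
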